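/- arXiv:2404.13090 — 6 statements merged into one kernel-verified Lean document; each statement's English description precedes it below -/
import Mathlib

section
/- Let L be the averaging operator on the m-regular tree with parameter 0 ≤ β < 1: L(u)(x) = u(x) - β u(x̂) - (1-β)·(1/m)∑_{y∈S^1(x)} u(y) for x ≠ ∅, and L(u)(∅) = u(∅) - (1/m)∑_{y∈S^1(∅)} u(y). If u satisfies L(u)(x) = h(x) for all x ∈ T, then for every x ≠ ∅ and every i ≥ 1, (β/(1-β))^i·(u(x)-u(x̂)) = m^{-i} ∑_{y∈S^i(x)} (u(y)-u(ŷ)) + (1/β)∑_{j=0}^{i-1} (β/(1-β))^{i-j} m^{-j} ∑_{y∈S^j(x)} h(y), provided β > 0. -/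
/-- The averaging operator on the `m`-regular tree with parameter `β`. -/
noncomputable def Lop (m : ℕ) (β : ℝ) (u : List (Fin m) → ℝ) (x : List (Fin m)) : ℝ :=
  if x = [] then u [] - (1 / m) * ∑ i : Fin m, u [i]
  else u x - β * u x.dropLast - ((1 - β) / m) * ∑ i : Fin m, u (x ++ [i])

/-!
Write `∇u(y) = u(y) - u(ŷ)`, `q = β / (1 - β)` and `A_j f (x)` for the mean of `f` over the
level-`j` descendants of `x`. At a non-root vertex the equation `L(u) = h` is equivalent to
`q ∇u = A_1 ∇u + h / (1 - β)`. Multiplying the identity for `i` by `q`, applying this relation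
under the linear operator `A_i`, and using `A_i ∘ A_1 = A_{i+1}` gives the identity for `i + 1`;
the factor `1 / β` appears because `1 / (1 - β) = q / β`.
-/

open Finset

namespace RegularTree

variable {m : ℕ}

/-- `y.dropLast` is the predecessor `ŷ` (the root is its own predecessor). -/
def grad (u : List (Fin m) → ℝ) (y : List (Fin m)) : ℝ := u y - u y.dropLast

noncomputable def sphereAvg (j : ℕ) (f : List (Fin m) → ℝ) (x : List (Fin m)) : ℝ :=
  (m : ℝ)⁻¹ ^ j * ∑ t : Fin j → Fin m, f (x ++ List.ofFn t)

theorem sphereAvg_zero (f : List (Fin m) → ℝ) (x : List (Fin m)) : sphereAvg 0 f x = f x := by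
  simp [sphereAvg]

theorem sphereAvg_one (f : List (Fin m) → ℝ) (x : List (Fin m)) :
    sphereAvg 1 f x = (m : ℝ)⁻¹ * ∑ c : Fin m, f (x ++ [c]) := by
  rw [sphereAvg, pow_one, ← (Equiv.funUnique (Fin 1) (Fin m)).symm.sum_comp]
  rfl

theorem sphereAvg_succ (j : ℕ) (f : List (Fin m) → ℝ) (x : List (Fin m)) :
    sphereAvg (j + 1) f x = sphereAvg j (sphereAvg 1 f) x := by
  rw [sphereAvg, sphereAvg]
  simp only [sphereAvg_one, mul_sum, pow_succ, mul_assoc]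
  rw [← (Fin.snocEquiv fun _ => Fin m).sum_comp, Fintype.sum_prod_type, sum_comm]
  refine sum_congr rfl fun t _ => sum_congr rfl fun c _ => ?_
  simp only [Fin.snocEquiv_apply, List.ofFn_succ', Fin.snoc_castSucc, Fin.snoc_last,
    List.concat_eq_append, List.append_assoc]

theorem sphereAvg_congr {j : ℕ} {f g : List (Fin m) → ℝ} {x : List (Fin m)}
    (hfg : ∀ t : Fin j → Fin m, f (x ++ List.ofFn t) = g (x ++ List.ofFn t)) :
    sphereAvg j f x = sphereAvg j g x := by
  simp only [sphereAvg, hfg]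

theorem sphereAvg_add (j : ℕ) (f g : List (Fin m) → ℝ) (x : List (Fin m)) :
    sphereAvg j (f + g) x = sphereAvg j f x + sphereAvg j g x := by
  simp only [sphereAvg, Pi.add_apply, sum_add_distrib, mul_add]

theorem sphereAvg_smul (j : ℕ) (c : ℝ) (f : List (Fin m) → ℝ) (x : List (Fin m)) :
    sphereAvg j (c • f) x = c * sphereAvg j f x := by
  simp only [sphereAvg, Pi.smul_apply, smul_eq_mul, ← mul_sum]
  ring

theorem mul_grad_eq_sphereAvg_add_Lop {β : ℝ} (hβ : β ≠ 1) (u : List (Fin m) → ℝ)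
    {y : List (Fin m)} (hy : y ≠ []) :
    β / (1 - β) * grad u y = sphereAvg 1 (grad u) y + (1 - β)⁻¹ * Lop m β u y := by
  obtain ⟨c, -⟩ := List.exists_mem_of_ne_nil y hy
  have hm : (m : ℝ) ≠ 0 := Nat.cast_ne_zero.mpr c.pos.ne'
  have hβ' : 1 - β ≠ 0 := sub_ne_zero.mpr hβ.symm
  simp only [sphereAvg_one, grad, List.dropLast_concat, sum_sub_distrib, sum_const, card_univ,
    Fintype.card_fin, nsmul_eq_mul, Lop, if_neg hy]
  field_simp
  ring

theorem pow_mul_grad_eq_sphereAvg_add_sum {β : ℝ} (hβ0 : β ≠ 0) (hβ1 : β ≠ 1)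
    (u : List (Fin m) → ℝ) {x : List (Fin m)} (hx : x ≠ []) (i : ℕ) :
    (β / (1 - β)) ^ i * grad u x = sphereAvg i (grad u) x
      + 1 / β * ∑ j ∈ range i, (β / (1 - β)) ^ (i - j) * sphereAvg j (Lop m β u) x := by
  induction i with
  | zero => simp [sphereAvg_zero]
  | succ i ih =>
    set q := β / (1 - β)
    have hstep : sphereAvg i (q • grad u) x
        = sphereAvg (i + 1) (grad u) x + (1 - β)⁻¹ * sphereAvg i (Lop m β u) x := by
      rw [sphereAvg_succ, ← sphereAvg_smul, ← sphereAvg_add]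
      exact sphereAvg_congr fun t =>
        mul_grad_eq_sphereAvg_add_Lop hβ1 u (List.append_ne_nil_of_left_ne_nil hx _)
    have hq : 1 / β * q = (1 - β)⁻¹ := by
      simp only [q]
      field_simp
    have hpow : ∀ j ∈ range i, q ^ (i + 1 - j) * sphereAvg j (Lop m β u) x
        = q * (q ^ (i - j) * sphereAvg j (Lop m β u) x) := fun j hj => by
      rw [Nat.sub_add_comm (mem_range.mp hj).le, pow_succ', mul_assoc]
    rw [pow_succ', mul_assoc, ih, mul_add, ← sphereAvg_smul, hstep, sum_range_succ,
      sum_congr rfl hpow, ← mul_sum, Nat.add_sub_cancel_left, pow_one, ← hq]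
    ring

end RegularTree

theorem stmt_4_general (m : ℕ) (β : ℝ) (hβ0 : 0 < β) (hβ1 : β < 1)
    (u h : List (Fin m) → ℝ) (heq : ∀ x, Lop m β u x = h x)
    (x : List (Fin m)) (hx : x ≠ []) (i : ℕ) :
    (β / (1 - β)) ^ i * (u x - u x.dropLast)
      = (m : ℝ)⁻¹ ^ i *
          (∑ t : Fin i → Fin m, (u (x ++ List.ofFn t) - u ((x ++ List.ofFn t).dropLast)))
        + (1 / β) * ∑ j ∈ Finset.range i,
            (β / (1 - β)) ^ (i - j) *
              ((m : ℝ)⁻¹ ^ j * ∑ t : Fin j → Fin m, h (x ++ List.ofFn t)) := by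
  obtain rfl : Lop m β u = h := funext heq
  exact RegularTree.pow_mul_grad_eq_sphereAvg_add_sum hβ0.ne' hβ1.ne u hx i

/-- If `L(u) = h` on the tree then for every `x ≠ ∅` and `i ≥ 1`,
`(β/(1-β))^i (u(x)-u(x̂)) = m^{-i} ∑_{y∈S^i(x)} (u(y)-u(ŷ))
  + (1/β) ∑_{j=0}^{i-1} (β/(1-β))^{i-j} m^{-j} ∑_{y∈S^j(x)} h(y)`. -/
theorem stmt_4 (m : ℕ) (hm : 2 ≤ m) (β : ℝ) (hβ0 : 0 < β) (hβ1 : β < 1)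
    (u h : List (Fin m) → ℝ) (heq : ∀ x, Lop m β u x = h x)
    (x : List (Fin m)) (hx : x ≠ []) (i : ℕ) (hi : 1 ≤ i) :
    (β / (1 - β)) ^ i * (u x - u x.dropLast)
      = (m : ℝ)⁻¹ ^ i *
          (∑ t : Fin i → Fin m, (u (x ++ List.ofFn t) - u ((x ++ List.ofFn t).dropLast)))
        + (1 / β) * ∑ j ∈ Finset.range i,
            (β / (1 - β)) ^ (i - j) *
              ((m : ℝ)⁻¹ ^ j * ∑ t : Fin j → Fin m, h (x ++ List.ofFn t)) :=
  stmt_4_general m β hβ0 hβ1 u h heq x hx i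
end

section
/- Let L be the averaging operator with parameter β ∈ [0,1) on the m-regular tree, h : T → ℝ, and f : [0,1] → ℝ continuous with f ≥ g. Under the hypotheses of the comparison principle, the Dirichlet problem L(u) = h on T with lim_{x→z} u(x) = f(ψ(z)) uniformly has at most one bounded solution. -/
/-- The boundary coding map `ψ : ∂T → [0,1]` on branches. -/
noncomputable def psiB (m : ℕ) (z : ℕ → Fin m) : ℝ :=
  ∑' k : ℕ, ((z k : ℕ) : ℝ) / (m : ℝ) ^ (k + 1)

/-- The node at level `n` along the branch `z`. -/
def branchNode (m : ℕ) (z : ℕ → Fin m) (n : ℕ) : List (Fin m) :=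
  List.ofFn (fun i : Fin n => z i)

/-- `u` attains the boundary datum `f` uniformly along branches. -/
def UnifBoundary (m : ℕ) (u : List (Fin m) → ℝ) (f : ℝ → ℝ) : Prop :=
  ∀ ε > (0 : ℝ), ∃ K : ℕ, ∀ (z : ℕ → Fin m) (n : ℕ), K ≤ n →
    |u (branchNode m z n) - f (psiB m z)| < ε

/-!
The difference `w` of two solutions satisfies `L(w) = 0`, i.e. `w` at every vertex is the
`β`-weighted average of its parent and the mean of its children (the root: mean of its children).
Hence the level maxima `aₙ = max_{|x| = n} w x` satisfy `a₀ ≤ a₁` and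
`aₙ₊₁ ≤ β aₙ + (1 - β) aₙ₊₂`, so they are nondecreasing. Since `w → 0` uniformly at the boundary,
`aₙ` is eventually below any `ε > 0`, hence `aₙ ≤ 0` for all `n`, i.e. `w ≤ 0`; by symmetry `w = 0`.
-/

open Finset

variable {m : ℕ}

lemma Lop_sub (β : ℝ) (u₁ u₂ : List (Fin m) → ℝ) (x : List (Fin m)) :
    Lop m β (u₁ - u₂) x = Lop m β u₁ x - Lop m β u₂ x := by
  unfold Lop
  split_ifs <;> simp only [Pi.sub_apply, sum_sub_distrib] <;> ring

lemma UnifBoundary.sub_lt {u₁ u₂ : List (Fin m) → ℝ} {f : ℝ → ℝ}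
    (h₁ : UnifBoundary m u₁ f) (h₂ : UnifBoundary m u₂ f) :
    ∀ ε > (0 : ℝ), ∃ K : ℕ, ∀ (z : ℕ → Fin m) (n : ℕ), K ≤ n →
      (u₁ - u₂) (branchNode m z n) < ε := by
  intro ε hε
  obtain ⟨K₁, hK₁⟩ := h₁ (ε / 2) (half_pos hε)
  obtain ⟨K₂, hK₂⟩ := h₂ (ε / 2) (half_pos hε)
  refine ⟨max K₁ K₂, fun z n hn => ?_⟩
  have e₁ := abs_lt.mp (hK₁ z n (le_of_max_le_left hn))
  have e₂ := abs_lt.mp (hK₂ z n (le_of_max_le_right hn))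
  simp only [Pi.sub_apply]
  linarith [e₁.2, e₂.1]

section MaximumPrinciple

variable [NeZero m] {β : ℝ} (w : List (Fin m) → ℝ)

lemma exists_branchNode_eq (x : List (Fin m)) : ∃ z : ℕ → Fin m, branchNode m z x.length = x :=
  ⟨fun i => x.getD i 0, List.ext_getElem (by simp [branchNode]) fun i _ _ => by
    simp [branchNode, List.getD_eq_getElem?_getD, *]⟩

noncomputable def levelMax (n : ℕ) : ℝ :=
  univ.sup' univ_nonempty fun v : Fin n → Fin m => w (List.ofFn v)

lemma le_levelMax (x : List (Fin m)) : w x ≤ levelMax w x.length := by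
  have := le_sup' (fun v : Fin x.length → Fin m => w (List.ofFn v)) (mem_univ x.get)
  rwa [List.ofFn_get] at this

lemma exists_length_eq_levelMax (n : ℕ) :
    ∃ x : List (Fin m), x.length = n ∧ w x = levelMax w n := by
  obtain ⟨v, -, hv⟩ :=
    exists_mem_eq_sup' univ_nonempty fun v : Fin n → Fin m => w (List.ofFn v)
  exact ⟨List.ofFn v, List.length_ofFn, hv.symm⟩

lemma sum_children_le_levelMax (x : List (Fin m)) :
    ∑ i : Fin m, w (x ++ [i]) ≤ m * levelMax w (x.length + 1) :=
  calc ∑ i : Fin m, w (x ++ [i]) ≤ ∑ _i : Fin m, levelMax w (x.length + 1) :=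
        sum_le_sum fun i _ => by simpa using le_levelMax w (x ++ [i])
    _ = m * levelMax w (x.length + 1) := by simp

lemma levelMax_zero_le_one (hw : Lop m β w [] ≤ 0) : levelMax w 0 ≤ levelMax w 1 := by
  obtain ⟨x, hx, hmax⟩ := exists_length_eq_levelMax w 0
  rw [List.length_eq_zero_iff] at hx
  subst hx
  have hm : (0 : ℝ) < m := Nat.cast_pos.mpr (NeZero.pos m)
  rw [← hmax]
  calc w [] ≤ (1 / m) * ∑ i : Fin m, w [i] := by
        simp only [Lop, if_true] at hw
        linarith
    _ ≤ (1 / m) * (m * levelMax w 1) := by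
        gcongr
        simpa using sum_children_le_levelMax w []
    _ = levelMax w 1 := by field_simp

lemma levelMax_succ_le (hβ0 : 0 ≤ β) (hβ1 : β ≤ 1) (hw : ∀ x, x ≠ [] → Lop m β w x ≤ 0)
    (n : ℕ) : levelMax w (n + 1) ≤ β * levelMax w n + (1 - β) * levelMax w (n + 2) := by
  obtain ⟨x, hx, hmax⟩ := exists_length_eq_levelMax w (n + 1)
  have hne : x ≠ [] := by
    rintro rfl
    simp at hx
  have hm : (0 : ℝ) < m := Nat.cast_pos.mpr (NeZero.pos m)
  have hβ1' : 0 ≤ (1 - β) / m := div_nonneg (by linarith) hm.le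
  rw [← hmax]
  calc w x ≤ β * w x.dropLast + ((1 - β) / m) * ∑ i : Fin m, w (x ++ [i]) := by
        have := hw x hne
        simp only [Lop, if_neg hne] at this
        linarith
    _ ≤ β * levelMax w n + ((1 - β) / m) * (m * levelMax w (n + 2)) := by
        gcongr
        · simpa [hx] using le_levelMax w x.dropLast
        · simpa [hx] using sum_children_le_levelMax w x
    _ = β * levelMax w n + (1 - β) * levelMax w (n + 2) := by field_simp

lemma levelMax_monotone (hβ0 : 0 ≤ β) (hβ1 : β < 1) (hw : ∀ x, Lop m β w x ≤ 0) :
    Monotone (levelMax w) := by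
  refine monotone_nat_of_le_succ fun n => ?_
  induction n with
  | zero => exact levelMax_zero_le_one w (hw [])
  | succ k ih =>
    have hstep := levelMax_succ_le w hβ0 hβ1.le (fun x _ => hw x) k
    have hk : (1 - β) * levelMax w (k + 1) ≤ (1 - β) * levelMax w (k + 2) := by
      nlinarith [mul_le_mul_of_nonneg_left ih hβ0]
    exact le_of_mul_le_mul_left hk (by linarith)

theorem le_zero_of_Lop_nonpos (hβ0 : 0 ≤ β) (hβ1 : β < 1) (hw : ∀ x, Lop m β w x ≤ 0)
    (hbd : ∀ ε > (0 : ℝ), ∃ K : ℕ, ∀ (z : ℕ → Fin m) (n : ℕ), K ≤ n →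
      w (branchNode m z n) < ε) (x : List (Fin m)) :
    w x ≤ 0 := by
  suffices ∀ n, levelMax w n ≤ 0 from (le_levelMax w x).trans (this _)
  by_contra! hpos
  obtain ⟨N, hN⟩ := hpos
  obtain ⟨K, hK⟩ := hbd _ hN
  obtain ⟨y, hy, hmax⟩ := exists_length_eq_levelMax w (max K N)
  obtain ⟨z, hz⟩ := exists_branchNode_eq y
  have hlt : w y < levelMax w N := hz ▸ hK z y.length (hy ▸ le_max_left K N)
  have hle : levelMax w N ≤ w y := hmax ▸ levelMax_monotone w hβ0 hβ1 hw (le_max_right K N)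
  exact hlt.not_ge hle

end MaximumPrinciple

theorem stmt_6_general (m : ℕ) (hm : 2 ≤ m) (β : ℝ) (hβ0 : 0 ≤ β) (hβ1 : β < 1)
    (h : List (Fin m) → ℝ) (f : ℝ → ℝ)
    (u₁ u₂ : List (Fin m) → ℝ)
    (heq₁ : ∀ x, Lop m β u₁ x = h x) (heq₂ : ∀ x, Lop m β u₂ x = h x)
    (hbd₁ : UnifBoundary m u₁ f) (hbd₂ : UnifBoundary m u₂ f) :
    u₁ = u₂ := by
  have : NeZero m := ⟨by omega⟩
  funext x
  have h₁₂ := le_zero_of_Lop_nonpos (u₁ - u₂) hβ0 hβ1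
    (fun y => by rw [Lop_sub, heq₁, heq₂, sub_self]) (hbd₁.sub_lt hbd₂) x
  have h₂₁ := le_zero_of_Lop_nonpos (u₂ - u₁) hβ0 hβ1
    (fun y => by rw [Lop_sub, heq₁, heq₂, sub_self]) (hbd₂.sub_lt hbd₁) x
  simp only [Pi.sub_apply] at h₁₂ h₂₁
  linarith

/-- Uniqueness for the Dirichlet problem: the problem `L(u) = h` with uniform
boundary datum `f ∘ ψ` has at most one bounded solution. -/
theorem stmt_6 (m : ℕ) (hm : 2 ≤ m) (β : ℝ) (hβ0 : 0 ≤ β) (hβ1 : β < 1)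
    (h : List (Fin m) → ℝ) (f : ℝ → ℝ) (hf : Continuous f)
    (u₁ u₂ : List (Fin m) → ℝ) (C₁ C₂ : ℝ)
    (hb₁ : ∀ x, |u₁ x| ≤ C₁) (hb₂ : ∀ x, |u₂ x| ≤ C₂)
    (heq₁ : ∀ x, Lop m β u₁ x = h x) (heq₂ : ∀ x, Lop m β u₂ x = h x)
    (hbd₁ : UnifBoundary m u₁ f) (hbd₂ : UnifBoundary m u₂ f) :
    u₁ = u₂ :=
  stmt_6_general m hm β hβ0 hβ1 h f u₁ u₂ heq₁ heq₂ hbd₁ hbd₂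
end

section
/- Let L be the averaging operator with 0 ≤ β < 1/2 on the m-regular tree, h : T → ℝ satisfying the solvability condition, φ : T → ℝ bounded, f : [0,1] → ℝ continuous with limsup_{x→z} φ(x) < f(ψ(z)). Define u(x) = inf{ w(x) : L(w) ≥ h on T, w ≥ φ on T, liminf_{x→z} w(x) ≥ f(ψ(z)) }. Then u itself satisfies L(u)(x) ≥ h(x) for all x ∈ T and u ≥ φ on T; i.e., the pointwise infimum of supersolutions above the obstacle is again a supersolution above the obstacle. -/
/-- The pointwise infimum of the admissible set
`Λ = { w : L(w) ≥ h, w ≥ φ, liminf_{x→z} w ≥ f(ψ(z)) }` is again a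
supersolution above the obstacle: `L(u) ≥ h` and `u ≥ φ` on the tree. -/
theorem stmt_11 (m : ℕ) (hm : 2 ≤ m) (β : ℝ) (hβ0 : 0 ≤ β) (hβ1 : β < 1 / 2)
    (h φ : List (Fin m) → ℝ) (f : ℝ → ℝ) (hf : Continuous f)
    (Mφ : ℝ) (hφb : ∀ x, |φ x| ≤ Mφ)
    (hφf : ∀ z : ℕ → Fin m,
      Filter.limsup (fun n => φ (branchNode m z n)) Filter.atTop < f (psiB m z))
    (Λ : Set (List (Fin m) → ℝ))
    (hΛ : Λ = {w | (∀ x, h x ≤ Lop m β w x) ∧ (∀ x, φ x ≤ w x) ∧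
      ∀ z : ℕ → Fin m,
        f (psiB m z) ≤ Filter.liminf (fun n => w (branchNode m z n)) Filter.atTop})
    (hne : Λ.Nonempty) (M : ℝ) (hbdd : ∀ w ∈ Λ, ∀ x, -M ≤ w x)
    (u : List (Fin m) → ℝ) (hu : ∀ x, u x = sInf ((fun w => w x) '' Λ)) :
    (∀ x, h x ≤ Lop m β u x) ∧ (∀ x, φ x ≤ u x) := by

  have hbb : ∀ x, BddBelow ((fun w => w x) '' Λ) := by
    intro x
    refine ⟨-M, ?_⟩
    rintro _ ⟨w, hw, rfl⟩
    exact hbdd w hw x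
  have hneI : ∀ x, ((fun w => w x) '' Λ).Nonempty := fun x => hne.image _
  have hule : ∀ w ∈ Λ, ∀ x, u x ≤ w x := by
    intro w hw x
    rw [hu x]
    exact csInf_le (hbb x) ⟨w, hw, rfl⟩
  have hφu : ∀ x, φ x ≤ u x := by
    intro x
    rw [hu x]
    apply le_csInf (hneI x)
    rintro _ ⟨w, hw, rfl⟩
    exact ((hΛ ▸ hw : _)).2.1 x
  refine ⟨?_, hφu⟩
  intro x
  apply le_of_forall_pos_le_add
  intro ε hε
  have : sInf ((fun w => w x) '' Λ) < u x + ε := by rw [← hu x]; linarith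
  obtain ⟨_, ⟨w, hwΛ, rfl⟩, hwx⟩ := exists_lt_of_csInf_lt (hneI x) this
  have hw1 : ∀ y, h y ≤ Lop m β w y := ((hΛ ▸ hwΛ : _)).1
  have hmpos : (0:ℝ) < m := by positivity
  have key : Lop m β w x ≤ Lop m β u x + ε := by
    unfold Lop
    split_ifs with hx
    · have hsum : ∑ i : Fin m, u [i] ≤ ∑ i : Fin m, w [i] :=
        Finset.sum_le_sum fun i _ => hule w hwΛ [i]
      have h1m : (0:ℝ) ≤ 1 / m := by positivity
      have := mul_le_mul_of_nonneg_left hsum h1m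
      subst hx
      linarith
    · have hsum : ∑ i : Fin m, u (x ++ [i]) ≤ ∑ i : Fin m, w (x ++ [i]) :=
        Finset.sum_le_sum fun i _ => hule w hwΛ (x ++ [i])
      have hc : (0:ℝ) ≤ (1 - β) / m := by
        apply div_nonneg _ (le_of_lt hmpos); linarith
      have h2 := mul_le_mul_of_nonneg_left hsum hc
      have h3 := mul_le_mul_of_nonneg_left (hule w hwΛ x.dropLast) hβ0
      linarith
  linarith [hw1 x]
end

section
/- In the obstacle problem from below on the m-regular tree, the infimum u of the admissible set Λ = { w : L(w) ≥ h, w ≥ φ, liminf boundary ≥ f } satisfies L(u)(x₀) = h(x₀) at every node x₀ where u(x₀) > φ(x₀). (If L(u)(x₀) > h(x₀) strictly, lowering u at x₀ by half the minimum of the two slacks produces an admissible competitor strictly below u, a contradiction.) -/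
lemma lop_anti (m : ℕ) (β : ℝ) (hβ0 : 0 ≤ β) (hβ1 : β ≤ 1)
    (u v : List (Fin m) → ℝ) (hle : ∀ y, v y ≤ u y) (x : List (Fin m))
    (hx : v x = u x) : Lop m β u x ≤ Lop m β v x := by
  unfold Lop
  split
  · rename_i hxe
    subst hxe
    rw [hx]
    have hs : ∑ i : Fin m, v [i] ≤ ∑ i : Fin m, u [i] :=
      Finset.sum_le_sum fun i _ => hle _
    have hm : (0:ℝ) ≤ 1 / m := by positivity
    nlinarith [mul_le_mul_of_nonneg_left hs hm]
  · rw [hx]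
    have h1 : ∑ i : Fin m, v (x ++ [i]) ≤ ∑ i : Fin m, u (x ++ [i]) :=
      Finset.sum_le_sum fun i _ => hle _
    have h2 : v x.dropLast ≤ u x.dropLast := hle _
    have hc : (0:ℝ) ≤ (1 - β) / m :=
      div_nonneg (by linarith) (Nat.cast_nonneg m)
    nlinarith [mul_le_mul_of_nonneg_left h1 hc, mul_le_mul_of_nonneg_left h2 hβ0]

/-- In the obstacle problem from below, the infimum `u` of the admissible set
`Λ = { w : L(w) ≥ h, w ≥ φ, liminf boundary ≥ f }` (which belongs to `Λ`)
satisfies `L(u)(x₀) = h(x₀)` at every node `x₀` where `u(x₀) > φ(x₀)`. -/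
theorem stmt_12 (m : ℕ) (hm : 2 ≤ m) (β : ℝ) (hβ0 : 0 ≤ β) (hβ1 : β < 1 / 2)
    (h φ : List (Fin m) → ℝ) (f : ℝ → ℝ) (hf : Continuous f)
    (Λ : Set (List (Fin m) → ℝ))
    (hΛ : Λ = {w | (∀ x, h x ≤ Lop m β w x) ∧ (∀ x, φ x ≤ w x) ∧
      ∀ z : ℕ → Fin m,
        f (psiB m z) ≤ Filter.liminf (fun n => w (branchNode m z n)) Filter.atTop})
    (u : List (Fin m) → ℝ) (huΛ : u ∈ Λ)
    (hu : ∀ x, u x = sInf ((fun w => w x) '' Λ)) :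
    ∀ x₀ : List (Fin m), φ x₀ < u x₀ → Lop m β u x₀ = h x₀ := by
  intro x₀ hφx
  obtain ⟨h1, h2, h3⟩ : (∀ x, h x ≤ Lop m β u x) ∧ (∀ x, φ x ≤ u x) ∧
      ∀ z : ℕ → Fin m,
        f (psiB m z) ≤ Filter.liminf (fun n => u (branchNode m z n)) Filter.atTop := by
    rw [hΛ] at huΛ; exact huΛ
  by_contra hne
  have hlt : h x₀ < Lop m β u x₀ := lt_of_le_of_ne (h1 x₀) (Ne.symm hne)
  set ε : ℝ := min (Lop m β u x₀ - h x₀) (u x₀ - φ x₀) / 2 with hε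
  have hmin1 : min (Lop m β u x₀ - h x₀) (u x₀ - φ x₀) ≤ Lop m β u x₀ - h x₀ := min_le_left _ _
  have hmin2 : min (Lop m β u x₀ - h x₀) (u x₀ - φ x₀) ≤ u x₀ - φ x₀ := min_le_right _ _
  have hminpos : 0 < min (Lop m β u x₀ - h x₀) (u x₀ - φ x₀) :=
    lt_min (by linarith) (by linarith)
  have hε0 : 0 < ε := by rw [hε]; linarith
  have hεa : ε ≤ Lop m β u x₀ - h x₀ := by rw [hε]; linarith
  have hεb : ε ≤ u x₀ - φ x₀ := by rw [hε]; linarith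
  set u₀ : List (Fin m) → ℝ := Function.update u x₀ (u x₀ - ε) with hu₀
  have hx0 : u₀ x₀ = u x₀ - ε := Function.update_self _ _ _
  have hle : ∀ y, u₀ y ≤ u y := by
    intro y
    rcases eq_or_ne y x₀ with rfl | hy
    · rw [hx0]; linarith
    · rw [hu₀, Function.update_of_ne hy]
  have hΛ0 : u₀ ∈ Λ := by
    rw [hΛ]
    refine ⟨?_, ?_, ?_⟩
    · intro x
      rcases eq_or_ne x x₀ with rfl | hx
      · have key : Lop m β u₀ x = Lop m β u x - ε := by
          unfold Lop
          rcases eq_or_ne x ([] : List (Fin m)) with rfl | hne'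
          · simp only [if_pos]
            have hch : ∀ i : Fin m, u₀ [i] = u [i] := fun i =>
              Function.update_of_ne (by simp) _ _
            rw [hx0]
            rw [Finset.sum_congr rfl (fun i _ => hch i)]
            ring
          · rw [if_neg hne', if_neg hne']
            have hch : ∀ i : Fin m, u₀ (x ++ [i]) = u (x ++ [i]) := fun i =>
              Function.update_of_ne (by simp) _ _
            have hdl : u₀ x.dropLast = u x.dropLast := by
              apply Function.update_of_ne
              intro hc
              have := congrArg List.length hc
              simp only [List.length_dropLast] at this
              have hpos : 0 < x.length := List.length_pos_iff.mpr hne'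
              omega
            rw [hx0, hdl, Finset.sum_congr rfl (fun i _ => hch i)]
            ring
        rw [key]
        linarith [h1 x]
      · have hxx : u₀ x = u x := Function.update_of_ne hx _ _
        exact le_trans (h1 x) (lop_anti m β hβ0 (by linarith) u u₀ hle x hxx)
    · intro x
      rcases eq_or_ne x x₀ with rfl | hx
      · rw [hx0]; linarith
      · rw [hu₀, Function.update_of_ne hx]; exact h2 x
    · intro z
      have heq : ∀ᶠ n in Filter.atTop,
          u₀ (branchNode m z n) = u (branchNode m z n) := by
        filter_upwards [Filter.eventually_gt_atTop x₀.length] with n hn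
        apply Function.update_of_ne
        intro hc
        have := congrArg List.length hc
        simp only [branchNode, List.length_ofFn] at this
        omega
      rw [Filter.liminf_congr heq]
      exact h3 z
  have hmem : u₀ x₀ ∈ (fun w => w x₀) '' Λ := ⟨u₀, hΛ0, rfl⟩
  have hbdd : BddBelow ((fun w => w x₀) '' Λ) := by
    refine ⟨φ x₀, ?_⟩
    rintro y ⟨w, hw, rfl⟩
    rw [hΛ] at hw
    exact hw.2.1 x₀
  have hsle := csInf_le hbdd hmem
  rw [← hu x₀, hx0] at hsle
  linarith
end

section
/- Let u_n, v_n be the iterated obstacle-problem sequences for the two membranes problem on the m-regular tree: u_n is the solution of the obstacle problem from below for L₁ - h₁ with datum f and obstacle v_{n-1}, and v_n is the solution of the obstacle problem from above for L₂ - h₂ with datum g and obstacle u_n. Then the sequences are monotone nondecreasing: u_n ≥ u_{n-1} and v_n ≥ v_{n-1} for all n, and u_n ≥ v_n. -/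
/-- The admissible set for the obstacle problem from below (supersolutions of
`L - h` above the obstacle `φ` with boundary liminf at least `f ∘ ψ`). -/
def LamBelow (m : ℕ) (β : ℝ) (h φ : List (Fin m) → ℝ) (f : ℝ → ℝ) :
    Set (List (Fin m) → ℝ) :=
  {w | (∀ x, h x ≤ Lop m β w x) ∧ (∀ x, φ x ≤ w x) ∧
    ∀ z : ℕ → Fin m,
      f (psiB m z) ≤ Filter.liminf (fun n => w (branchNode m z n)) Filter.atTop}

/-- The admissible set for the obstacle problem from above (subsolutions of
`L - h` below the obstacle `φ` with boundary limsup at most `g ∘ ψ`). -/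
def LamAbove (m : ℕ) (β : ℝ) (h φ : List (Fin m) → ℝ) (g : ℝ → ℝ) :
    Set (List (Fin m) → ℝ) :=
  {w | (∀ x, Lop m β w x ≤ h x) ∧ (∀ x, w x ≤ φ x) ∧
    ∀ z : ℕ → Fin m,
      Filter.limsup (fun n => w (branchNode m z n)) Filter.atTop ≤ g (psiB m z)}

/-- `u` solves the obstacle problem from below: it is the pointwise least
element of the admissible set. -/
def SolBelow (m : ℕ) (β : ℝ) (h φ : List (Fin m) → ℝ) (f : ℝ → ℝ)
    (u : List (Fin m) → ℝ) : Prop :=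
  u ∈ LamBelow m β h φ f ∧ ∀ w ∈ LamBelow m β h φ f, ∀ x, u x ≤ w x

/-- `v` solves the obstacle problem from above: it is the pointwise greatest
element of the admissible set. -/
def SolAbove (m : ℕ) (β : ℝ) (h φ : List (Fin m) → ℝ) (g : ℝ → ℝ)
    (v : List (Fin m) → ℝ) : Prop :=
  v ∈ LamAbove m β h φ g ∧ ∀ w ∈ LamAbove m β h φ g, ∀ x, w x ≤ v x

/-- Monotonicity of the iterated obstacle-problem sequences for the two
membranes problem: `u_{n+1} ≤ u_{n+2}`, `v_n ≤ v_{n+1}` and `v_n ≤ u_n`. -/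
theorem stmt_13 (m : ℕ) (hm : 2 ≤ m) (β₁ β₂ : ℝ)
    (hβ₁ : 0 ≤ β₁ ∧ β₁ < 1 / 2) (hβ₂ : 0 ≤ β₂ ∧ β₂ < 1 / 2)
    (h₁ h₂ : List (Fin m) → ℝ) (f g : ℝ → ℝ) (hf : Continuous f)
    (hg : Continuous g) (hfg : ∀ t ∈ Set.Icc (0 : ℝ) 1, g t < f t)
    (u v : ℕ → List (Fin m) → ℝ) (C : ℝ) (hv0b : ∀ x, |v 0 x| ≤ C)
    (hv0sub : ∀ x, Lop m β₂ (v 0) x ≤ h₂ x)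
    (hv0bd : ∀ z : ℕ → Fin m,
      Filter.limsup (fun n => v 0 (branchNode m z n)) Filter.atTop ≤ g (psiB m z))
    (hun : ∀ n : ℕ, SolBelow m β₁ h₁ (v n) f (u (n + 1)))
    (hvn : ∀ n : ℕ, SolAbove m β₂ h₂ (u (n + 1)) g (v (n + 1))) :
    ∀ n : ℕ, ∀ x : List (Fin m),
      u (n + 1) x ≤ u (n + 2) x ∧ v n x ≤ v (n + 1) x ∧ v (n + 1) x ≤ u (n + 1) x := by
  have key : ∀ n, v n ∈ LamAbove m β₂ h₂ (u (n+1)) g := by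
    intro n
    cases n with
    | zero => exact ⟨hv0sub, (hun 0).1.2.1, hv0bd⟩
    | succ k =>
      obtain ⟨⟨hs, _, hb⟩, _⟩ := hvn k
      exact ⟨hs, (hun (k+1)).1.2.1, hb⟩
  intro n x
  have hv : ∀ y, v n y ≤ v (n+1) y := (hvn n).2 _ (key n)
  refine ⟨?_, hv x, (hvn n).1.2.1 x⟩
  have hmem : u (n+2) ∈ LamBelow m β₁ h₁ (v n) f := by
    obtain ⟨⟨hs, ho, hb⟩, _⟩ := hun (n+1)
    exact ⟨hs, fun y => (hv y).trans (ho y), hb⟩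
  exact (hun n).2 _ hmem x
end

section
/- Let (u, v) solve the two membranes problem on the m-regular tree with boundary data f > g (continuous on [0,1]), and suppose there exist a subsolution ū for L₁ - h₁ with boundary limit f and a supersolution v̄ for L₂ - h₂ with boundary limit g such that v ≤ v̄ and ū ≤ u on T. Then there exists C such that u(x) > v(x) for all nodes x with |x| > C; consequently the coincidence set { x ∈ T : u(x) = v(x) } is finite. -/
lemma psiB_mem (m : ℕ) (hm : 2 ≤ m) (z : ℕ → Fin m) :
    psiB m z ∈ Set.Icc (0 : ℝ) 1 := by
  have hm0 : (0 : ℝ) < m := by exact_mod_cast (by omega : 0 < m)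
  have hr : (1 : ℝ) / m < 1 := by
    rw [div_lt_one hm0]; exact_mod_cast (by omega : 1 < m)
  have hr0 : (0 : ℝ) ≤ 1 / m := by positivity
  have hgeo : Summable (fun k : ℕ => ((m : ℝ) - 1) * (1 / m) ^ (k + 1)) := by
    apply Summable.mul_left
    exact (summable_geometric_of_lt_one hr0 hr).comp_injective (add_left_injective 1)
  have hle : ∀ k : ℕ, ((z k : ℕ) : ℝ) / (m : ℝ) ^ (k + 1)
      ≤ ((m : ℝ) - 1) * (1 / m) ^ (k + 1) := by
    intro k
    have hz : ((z k : ℕ) : ℝ) ≤ (m : ℝ) - 1 := by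
      have := (z k).2
      have : ((z k : ℕ) : ℝ) ≤ (m : ℝ) - 1 := by
        have hzk : (z k : ℕ) + 1 ≤ m := (z k).2
        have : ((z k : ℕ) : ℝ) + 1 ≤ (m : ℝ) := by exact_mod_cast hzk
        linarith
      exact this
    rw [div_eq_mul_inv, one_div, inv_pow]
    exact mul_le_mul_of_nonneg_right hz (by positivity)
  have hnn : ∀ k : ℕ, (0 : ℝ) ≤ ((z k : ℕ) : ℝ) / (m : ℝ) ^ (k + 1) := by
    intro k; positivity
  have hsum : Summable (fun k : ℕ => ((z k : ℕ) : ℝ) / (m : ℝ) ^ (k + 1)) :=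
    Summable.of_nonneg_of_le hnn hle hgeo
  constructor
  · exact tsum_nonneg hnn
  · have h1 : psiB m z ≤ ∑' k : ℕ, ((m : ℝ) - 1) * (1 / m) ^ (k + 1) :=
      Summable.tsum_le_tsum hle hsum hgeo
    have h2 : ∑' k : ℕ, ((m : ℝ) - 1) * (1 / m) ^ (k + 1) = 1 := by
      have : ∀ k : ℕ, ((m : ℝ) - 1) * (1 / m) ^ (k + 1)
          = (((m : ℝ) - 1) * (1 / m)) * (1 / m) ^ k := by
        intro k; ring
      rw [tsum_congr this, tsum_mul_left, tsum_geometric_of_lt_one hr0 hr]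
      have hm1 : (m : ℝ) - 1 ≠ 0 := by
        have : (1 : ℝ) < m := by exact_mod_cast (by omega : 1 < m)
        intro h; linarith
      field_simp
    linarith [h1, h2.le]

/-- If `(u,v)` solves the two membranes problem with strictly separated
continuous boundary data `f > g`, and there are a subsolution `ū ≤ u` with
uniform boundary limit `f ∘ ψ` and a supersolution `v̄ ≥ v` with uniform
boundary limit `g ∘ ψ`, then `u > v` at all nodes of sufficiently large level;
hence the coincidence set `{x : u(x) = v(x)}` is finite. -/
theorem stmt_15 (m : ℕ) (hm : 2 ≤ m)
    (u v ubar vbar : List (Fin m) → ℝ) (f g : ℝ → ℝ)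
    (hf : Continuous f) (hg : Continuous g)
    (hfg : ∀ t ∈ Set.Icc (0 : ℝ) 1, g t < f t)
    (husub : ∀ x, ubar x ≤ u x) (hvsup : ∀ x, v x ≤ vbar x)
    (hub : ∀ ε > (0 : ℝ), ∃ K : ℕ, ∀ (z : ℕ → Fin m) (n : ℕ), K ≤ n →
      |ubar (branchNode m z n) - f (psiB m z)| < ε)
    (hvb : ∀ ε > (0 : ℝ), ∃ K : ℕ, ∀ (z : ℕ → Fin m) (n : ℕ), K ≤ n →
      |vbar (branchNode m z n) - g (psiB m z)| < ε) :
    ∃ C : ℕ, (∀ x : List (Fin m), C < x.length → v x < u x) ∧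
      {x : List (Fin m) | u x = v x}.Finite := by
  -- minimum of f - g on [0,1]
  obtain ⟨t0, ht0, hmin⟩ :=
    (isCompact_Icc : IsCompact (Set.Icc (0:ℝ) 1)).exists_isMinOn
      (Set.nonempty_Icc.2 zero_le_one) ((hf.sub hg).continuousOn)
  set δ : ℝ := f t0 - g t0 with hδdef
  have hδ : 0 < δ := sub_pos.2 (hfg t0 ht0)
  have hδle : ∀ t ∈ Set.Icc (0:ℝ) 1, δ ≤ f t - g t := fun t ht => hmin ht
  obtain ⟨K₁, hK₁⟩ := hub (δ / 2) (by linarith)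
  obtain ⟨K₂, hK₂⟩ := hvb (δ / 2) (by linarith)
  have hmain : ∀ x : List (Fin m), max K₁ K₂ < x.length → v x < u x := by
    intro x hx
    -- extend x to a branch
    set z : ℕ → Fin m := fun k => x.getD k ⟨0, by omega⟩ with hz
    have hxz : branchNode m z x.length = x := by
      apply List.ext_getElem
      · simp [branchNode]
      · intro i h1 h2
        simp [branchNode, hz, List.getD_eq_getElem?_getD, List.getElem?_eq_getElem h2]
    have h1 := hK₁ z x.length (le_trans (le_max_left _ _) (le_of_lt hx))
    have h2 := hK₂ z x.length (le_trans (le_max_right _ _) (le_of_lt hx))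
    rw [hxz] at h1 h2
    have hψ := psiB_mem m hm z
    have hδψ := hδle _ hψ
    have ha := abs_lt.1 h1
    have hb := abs_lt.1 h2
    calc v x ≤ vbar x := hvsup x
      _ < g (psiB m z) + δ / 2 := by linarith [hb.2]
      _ ≤ f (psiB m z) - δ / 2 := by linarith
      _ < ubar x := by linarith [ha.1]
      _ ≤ u x := husub x
  refine ⟨max K₁ K₂, hmain, ?_⟩
  apply Set.Finite.subset (List.finite_length_le (Fin m) (max K₁ K₂))
  intro x hx
  simp only [Set.mem_setOf_eq] at hx ⊢
  by_contra h
  push_neg at h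
  exact absurd hx (ne_of_gt (hmain x (by omega)))
end
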